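/- arXiv:2306.03955 — 2 statements merged into one kernel-verified Lean document; each statement's English description precedes it below -/
import Mathlib

section
/- Let A and B be positive semidefinite matrices with 0 ⪯ A ⪯ B (Loewner order) and Tr A > 0. Then Φ(A) ⪯ Φ(B), i.e., the map Φ(A) = A − A²/Tr(A) is monotone with respect to the Loewner order on psd matrices. -/
/-!
Write `B = A + C` with `C ⪰ 0`, `a = Tr A`, `c = Tr C`. Then `Φ` is superadditive with an explicit
defect: `Φ(A + C) - Φ(A) - Φ(C) = (c A - a C)² / (a c (a + c)) ⪰ 0`. Moreover `Φ(C) ⪰ 0`, since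
`Φ(C) = f(C)` for `f(x) = x - x² / c`, which is nonnegative on the spectrum `⊆ [0, c]` of `C`.
Hence `Φ(B) - Φ(A) ⪰ Φ(C) ⪰ 0`.
-/

open Matrix

namespace Matrix

variable {n : Type*} [Fintype n] [DecidableEq n]

noncomputable def phi (A : Matrix n n ℝ) : Matrix n n ℝ := A - A.trace⁻¹ • (A * A)

lemma PosSemidef.eigenvalues_le_trace {A : Matrix n n ℝ} (hA : A.PosSemidef) (i : n) :
    hA.1.eigenvalues i ≤ A.trace := by
  rw [hA.1.trace_eq_sum_eigenvalues]
  exact Finset.single_le_sum (fun j _ => hA.eigenvalues_nonneg j) (Finset.mem_univ i)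

open scoped MatrixOrder in
lemma posSemidef_phi {A : Matrix n n ℝ} (hA : A.PosSemidef) : (phi A).PosSemidef := by
  have hcfc : cfc (fun x : ℝ => x - A.trace⁻¹ * x ^ 2) A = phi A := by
    rw [cfc_sub (fun x : ℝ => x) (fun x => A.trace⁻¹ * x ^ 2) A, cfc_id' ℝ A,
      cfc_const_mul _ _ A, cfc_pow_id A 2, sq, phi]
  rw [← nonneg_iff_posSemidef, ← hcfc]
  refine cfc_nonneg fun x hx => ?_
  obtain ⟨i, rfl⟩ := hA.1.spectrum_real_eq_range_eigenvalues ▸ hx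
  have hle := div_le_one_of_le₀ (hA.eigenvalues_le_trace i) hA.trace_nonneg
  calc 0 ≤ hA.1.eigenvalues i * (1 - hA.1.eigenvalues i / A.trace) :=
        mul_nonneg (hA.eigenvalues_nonneg i) (sub_nonneg.mpr hle)
    _ = _ := by ring

lemma phi_add_sub_phi_sub_phi {A C : Matrix n n ℝ} (hA : A.trace ≠ 0) (hC : C.trace ≠ 0)
    (hAC : A.trace + C.trace ≠ 0) :
    phi (A + C) - phi A - phi C = (A.trace * C.trace * (A.trace + C.trace))⁻¹ •
      ((C.trace • A - A.trace • C) * (C.trace • A - A.trace • C)) := by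
  simp only [phi, trace_add, sub_mul, mul_sub, add_mul, mul_add, smul_mul_assoc, mul_smul_comm,
    smul_smul, smul_sub, smul_add]
  match_scalars <;> field_simp <;> ring

lemma posSemidef_phi_add_sub_phi_sub_phi {A C : Matrix n n ℝ} (hA : A.IsHermitian)
    (hC : C.IsHermitian) (hA₀ : 0 < A.trace) (hC₀ : 0 < C.trace) :
    (phi (A + C) - phi A - phi C).PosSemidef := by
  rw [phi_add_sub_phi_sub_phi hA₀.ne' hC₀.ne' (by positivity)]
  have hM : (C.trace • A - A.trace • C).IsHermitian := (hA.smul (.all _)).sub (hC.smul (.all _))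
  refine .smul ?_ (by positivity)
  simpa only [hM.eq] using posSemidef_conjTranspose_mul_self (C.trace • A - A.trace • C)

end Matrix

/-- Monotonicity of `Φ(A) = A − A²/Tr(A)` with respect to the Loewner order. -/
theorem phi_monotone {N : ℕ} (A B : Matrix (Fin N) (Fin N) ℝ)
    (hA : A.PosSemidef) (hAB : (B - A).PosSemidef) (htrA : 0 < A.trace) :
    ((B - B.trace⁻¹ • (B * B)) - (A - A.trace⁻¹ • (A * A))).PosSemidef := by
  obtain ⟨C, hC, rfl⟩ : ∃ C, C.PosSemidef ∧ B = A + C := ⟨B - A, hAB, by abel⟩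
  rcases hC.trace_nonneg.eq_or_lt with hC₀ | hC₀
  · simpa [hC.trace_eq_zero_iff.mp hC₀.symm] using PosSemidef.zero
  have h := (posSemidef_phi_add_sub_phi_sub_phi hA.1 hC.1 htrA hC₀).add (posSemidef_phi hC)
  rwa [sub_add_cancel] at h
end

section
/- Let A be a symmetric psd N×N matrix, S ⊆ {1,…,N}, Â = A(:,S)A(S,S)^†A(S,:) its Nyström approximation, and g ∈ ℝ^N. Then ⟨g, (A−Â)A^†(A−Â)g⟩ ≤ ⟨g, (A−Â)g⟩, provided the range of A − Â is contained in the range of A. -/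
/-! Write `A = Mᵀ M`. Then `Â = Mᵀ Π M`, where `Π = M_S (M_Sᵀ M_S)† M_Sᵀ` is a symmetric
idempotent, so both `Â` and `R = A − Â = Mᵀ (1 − Π) M` are positive semidefinite. For
`u = A† R g` the range condition gives `A u = R g`, hence `⟨g, R A† R g⟩ = uᵀ A u = uᵀ R g`;
expanding `0 ≤ (g − u)ᵀ R (g − u)` and using `uᵀ R u ≤ uᵀ A u = uᵀ R g` gives the bound. -/

open Matrix

/-- `P` is the Moore–Penrose pseudoinverse of `B` (real matrices). -/
def IsMoorePenrose {m : Type*} [Fintype m] (B P : Matrix m m ℝ) : Prop :=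
  B * P * B = B ∧ P * B * P = P ∧ (B * P)ᵀ = B * P ∧ (P * B)ᵀ = P * B

namespace IsMoorePenrose

variable {m : Type*} [Fintype m] {B P P' : Matrix m m ℝ}

theorem unique (hP : IsMoorePenrose B P) (hP' : IsMoorePenrose B P') : P = P' := by
  obtain ⟨h₁, h₂, h₃, h₄⟩ := hP
  obtain ⟨h₁', h₂', h₃', h₄'⟩ := hP'
  have hBP : B * P = B * P' :=
    calc B * P = (B * P')ᵀ * (B * P)ᵀ := by rw [h₃, h₃', ← mul_assoc, h₁']
    _ = B * P' := by rw [← transpose_mul, ← mul_assoc, h₁, h₃']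
  have hPB : P * B = P' * B :=
    calc P * B = (P * B)ᵀ * (P' * B)ᵀ := by rw [h₄, h₄', mul_assoc, ← mul_assoc B, h₁']
    _ = P' * B := by rw [← transpose_mul, mul_assoc, ← mul_assoc B, h₁, h₄']
  calc P = P * (B * P) := by rw [← mul_assoc, h₂]
  _ = P' := by rw [hBP, ← mul_assoc, hPB, h₂']

theorem transpose (hP : IsMoorePenrose B P) : IsMoorePenrose Bᵀ Pᵀ := by
  obtain ⟨h₁, h₂, h₃, h₄⟩ := hP
  refine ⟨?_, ?_, ?_, ?_⟩
  · rw [← transpose_mul, ← transpose_mul, ← mul_assoc, h₁]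
  · rw [← transpose_mul, ← transpose_mul, ← mul_assoc, h₂]
  · rw [← transpose_mul, h₄, h₄]
  · rw [← transpose_mul, h₃, h₃]

theorem transpose_eq_self (hB : Bᵀ = B) (hP : IsMoorePenrose B P) : Pᵀ = P :=
  (hB ▸ hP.transpose).unique hP

end IsMoorePenrose

section Nystrom

variable {k n s : Type*} [Fintype k]

theorem Matrix.PosSemidef.exists_eq_transpose_mul_self [Fintype n] {A : Matrix n n ℝ}
    (hA : A.PosSemidef) : ∃ M : Matrix n n ℝ, A = Mᵀ * M := by
  classical
  open scoped MatrixOrder in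
  obtain ⟨M, hM⟩ := CStarAlgebra.nonneg_iff_eq_star_mul_self.mp hA.nonneg
  exact ⟨M, hM⟩

theorem Matrix.posSemidef_of_transpose_eq_of_mul_self_eq [Fintype n] {K : Matrix n n ℝ}
    (hKT : Kᵀ = K) (hKK : K * K = K) : K.PosSemidef := by
  have hK : K = Kᴴ * K := by rw [conjTranspose_eq_transpose_of_trivial, hKT, hKK]
  exact hK ▸ posSemidef_conjTranspose_mul_self K

theorem Matrix.PosSemidef.transpose_mul_mul_same [Fintype n] {K : Matrix n n ℝ}
    (hK : K.PosSemidef) (M : Matrix n k ℝ) : (Mᵀ * K * M).PosSemidef :=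
  conjTranspose_eq_transpose_of_trivial M ▸ hK.conjTranspose_mul_mul_same M

theorem Matrix.PosSemidef.isSymm {R : Matrix n n ℝ} (hR : R.PosSemidef) : R.IsSymm :=
  isHermitian_iff_isSymm.mp hR.1

/-- The Nyström approximation `A(:,S) A(S,S)† A(S,:)` of `A`, for a pseudoinverse `P` of
`A(S,S)`, with the column subset `S` given as an index map `f`. -/
def nystromApprox [Fintype s] (A : Matrix n n ℝ) (f : s → n) (P : Matrix s s ℝ) : Matrix n n ℝ :=
  A.submatrix id f * P * (A.submatrix id f)ᵀ

theorem IsMoorePenrose.transpose_eq_and_mul_self_eq [Fintype s] {X : Matrix k s ℝ}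
    {P : Matrix s s ℝ} (hP : IsMoorePenrose (Xᵀ * X) P) :
    (X * P * Xᵀ)ᵀ = X * P * Xᵀ ∧ (X * P * Xᵀ) * (X * P * Xᵀ) = X * P * Xᵀ := by
  have hPT : Pᵀ = P := hP.transpose_eq_self (by rw [transpose_mul, transpose_transpose])
  constructor
  · rw [transpose_mul, transpose_mul, transpose_transpose, hPT, Matrix.mul_assoc]
  · calc (X * P * Xᵀ) * (X * P * Xᵀ) = X * (P * (Xᵀ * X) * P) * Xᵀ := by
          simp only [Matrix.mul_assoc]
    _ = X * P * Xᵀ := by rw [hP.2.1]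

theorem nystromApprox_transpose_mul_self [Fintype s] (M : Matrix k n ℝ) (f : s → n)
    (P : Matrix s s ℝ) :
    nystromApprox (Mᵀ * M) f P = Mᵀ * (M.submatrix id f * P * (M.submatrix id f)ᵀ) * M := by
  rw [nystromApprox, submatrix_mul _ _ _ id _ Function.bijective_id, submatrix_id_id]
  simp only [transpose_mul, transpose_transpose, Matrix.mul_assoc]

theorem Matrix.submatrix_transpose_mul_self (M : Matrix k n ℝ) (f : s → n) :
    (Mᵀ * M).submatrix f f = (M.submatrix id f)ᵀ * M.submatrix id f := by
  rw [submatrix_mul _ _ _ id _ Function.bijective_id, transpose_submatrix]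

theorem posSemidef_nystromApprox [Fintype n] [Fintype s] {A : Matrix n n ℝ} (hA : A.PosSemidef)
    {f : s → n} {P : Matrix s s ℝ} (hP : IsMoorePenrose (A.submatrix f f) P) :
    (nystromApprox A f P).PosSemidef ∧ (A - nystromApprox A f P).PosSemidef := by
  classical
  obtain ⟨M, rfl⟩ := hA.exists_eq_transpose_mul_self
  rw [submatrix_transpose_mul_self] at hP
  obtain ⟨hKT, hKK⟩ := hP.transpose_eq_and_mul_self_eq
  set K := M.submatrix id f * P * (M.submatrix id f)ᵀ
  have hResidual : Mᵀ * M - nystromApprox (Mᵀ * M) f P = Mᵀ * (1 - K) * M := by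
    rw [nystromApprox_transpose_mul_self, Matrix.mul_sub, Matrix.sub_mul, Matrix.mul_one]
  rw [hResidual, nystromApprox_transpose_mul_self]
  refine ⟨(posSemidef_of_transpose_eq_of_mul_self_eq hKT hKK).transpose_mul_mul_same M,
    (posSemidef_of_transpose_eq_of_mul_self_eq ?_ ?_).transpose_mul_mul_same M⟩
  · rw [transpose_sub, transpose_one, hKT]
  · rw [sub_mul, mul_sub, mul_sub, hKK, mul_one, one_mul, mul_one, sub_self, sub_zero]

end Nystrom

section Quadratic

variable {n : Type*} [Fintype n]

theorem Matrix.IsSymm.dotProduct_mulVec_comm {α : Type*} [CommSemiring α] {R : Matrix n n α}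
    (hR : R.IsSymm) (x y : n → α) : x ⬝ᵥ R *ᵥ y = y ⬝ᵥ R *ᵥ x := by
  rw [dotProduct_mulVec, ← mulVec_transpose, hR.eq, dotProduct_comm]

theorem Matrix.PosSemidef.dotProduct_mulVec_le_of_mulVec_eq {A R : Matrix n n ℝ}
    (hR : R.PosSemidef) (hAR : (A - R).PosSemidef) {g u : n → ℝ} (h : A *ᵥ u = R *ᵥ g) :
    u ⬝ᵥ A *ᵥ u ≤ g ⬝ᵥ R *ᵥ g := by
  have hAu : u ⬝ᵥ A *ᵥ u = u ⬝ᵥ R *ᵥ g := by rw [h]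
  have hRu : u ⬝ᵥ R *ᵥ u ≤ u ⬝ᵥ R *ᵥ g := by
    have := hAR.dotProduct_mulVec_nonneg u
    rw [star_trivial, sub_mulVec, dotProduct_sub, hAu] at this
    linarith
  have hdiff : 0 ≤ g ⬝ᵥ R *ᵥ g - 2 * (u ⬝ᵥ R *ᵥ g) + u ⬝ᵥ R *ᵥ u := by
    have := hR.dotProduct_mulVec_nonneg (g - u)
    rw [star_trivial, mulVec_sub, sub_dotProduct, dotProduct_sub, dotProduct_sub,
      hR.isSymm.dotProduct_mulVec_comm g u] at this
    linarith
  linarith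

theorem Matrix.PosSemidef.dotProduct_mul_mul_mulVec_le {A R Q : Matrix n n ℝ}
    (hR : R.PosSemidef) (hAR : (A - R).PosSemidef) (hQ : A * Q * A = A) {g : n → ℝ}
    (hg : ∃ w, A *ᵥ w = R *ᵥ g) : g ⬝ᵥ (R * Q * R) *ᵥ g ≤ g ⬝ᵥ R *ᵥ g := by
  obtain ⟨w, hw⟩ := hg
  have hAu : A *ᵥ (Q *ᵥ (R *ᵥ g)) = R *ᵥ g := by
    rw [← hw, mulVec_mulVec, mulVec_mulVec, hQ]
  calc g ⬝ᵥ (R * Q * R) *ᵥ g = Q *ᵥ (R *ᵥ g) ⬝ᵥ A *ᵥ (Q *ᵥ (R *ᵥ g)) := by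
        rw [← mulVec_mulVec, ← mulVec_mulVec, hR.isSymm.dotProduct_mulVec_comm, hAu]
  _ ≤ g ⬝ᵥ R *ᵥ g := hR.dotProduct_mulVec_le_of_mulVec_eq hAR hAu

end Quadratic

/-- For the Nyström residual `R = A − Â` of a psd matrix `A`, one has
`⟨g, R A† R g⟩ ≤ ⟨g, R g⟩`, provided the range of `R` lies in the range of `A`. -/
theorem nystrom_residual_quadratic_bound {N : ℕ} (A : Matrix (Fin N) (Fin N) ℝ)
    (hA : A.PosSemidef) (S : Finset (Fin N))
    (P : Matrix ↥S ↥S ℝ)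
    (hP : IsMoorePenrose (A.submatrix (Subtype.val) (Subtype.val)) P)
    (Q : Matrix (Fin N) (Fin N) ℝ) (hQ : IsMoorePenrose A Q)
    (g : Fin N → ℝ)
    (hrange : ∀ v : Fin N → ℝ, ∃ w : Fin N → ℝ,
      A.mulVec w = (A - A.submatrix id (Subtype.val : S → Fin N) * P * (A.submatrix id (Subtype.val : S → Fin N))ᵀ).mulVec v) :
    g ⬝ᵥ ((A - A.submatrix id (Subtype.val : S → Fin N) * P * (A.submatrix id (Subtype.val : S → Fin N))ᵀ) * Q *
        (A - A.submatrix id (Subtype.val : S → Fin N) * P * (A.submatrix id (Subtype.val : S → Fin N))ᵀ)).mulVec g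
      ≤ g ⬝ᵥ (A - A.submatrix id (Subtype.val : S → Fin N) * P * (A.submatrix id (Subtype.val : S → Fin N))ᵀ).mulVec g := by
  obtain ⟨hApprox, hResidual⟩ := posSemidef_nystromApprox hA hP
  exact hResidual.dotProduct_mul_mul_mulVec_le (by rwa [sub_sub_cancel]) hQ.1 (hrange g)
end
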